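/- Let α > 1 and let (p_n) be a sequence of primes satisfying p_n^α ≤ p_{n+1} < (p_n + 1)^α - 1 for all n ≥ 0. Define a_n = p_n^{α^{-n}} and b_n = (p_n+1)^{α^{-n}}. Then (a_n) is nondecreasing, (b_n) is strictly decreasing, a_n < b_n for all n, and A := lim_{n→∞} a_n exists and satisfies ⌊A^{α^n}⌋ = p_n for every n. -/

import Mathlib

/-!
Raising to the power `α^{-(n+1)}` turns `p_n^α ≤ p_{n+1}` into `a_n ≤ a_{n+1}` and
`p_{n+1} + 1 < (p_n + 1)^α` into `b_{n+1} < b_n`. The nested intervals `[a_n, b_n]` shrink to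
`A = sup a_n`, and `a_n ≤ A < b_n` is `p_n ≤ A^{α^n} < p_n + 1` after raising to the power `α^n`.
-/

open Filter Topology Set

theorem exists_tendsto_of_monotone_of_strictAnti {X : Type*} [ConditionallyCompleteLinearOrder X]
    [TopologicalSpace X] [OrderTopology X] {a b : ℕ → X} (ha : Monotone a) (hb : StrictAnti b)
    (hab : a ≤ b) : ∃ A, Tendsto a atTop (𝓝 A) ∧ ∀ n, A ∈ Ico (a n) (b n) := by
  have hA := mem_iInter.1 (ha.ciSup_mem_iInter_Icc_of_antitone hb.antitone hab)
  have hbdd : BddAbove (range a) :=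
    ⟨b 0, forall_mem_range.2 fun n => (hab n).trans (hb.antitone n.zero_le)⟩
  exact ⟨⨆ n, a n, tendsto_atTop_ciSup ha hbdd,
    fun n => ⟨(hA n).1, (hA (n + 1)).2.trans_lt (hb n.lt_succ_self)⟩⟩

theorem Nat.floor_rpow_eq_of_mem_Ico {A t : ℝ} {m : ℕ} (ht : 0 < t)
    (hA : A ∈ Ico ((m : ℝ) ^ t⁻¹) (((m : ℝ) + 1) ^ t⁻¹)) : ⌊A ^ t⌋₊ = m := by
  have hA0 : 0 ≤ A := (Real.rpow_nonneg m.cast_nonneg _).trans hA.1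
  rw [Nat.floor_eq_iff (by positivity)]
  exact ⟨(Real.rpow_inv_le_iff_of_pos m.cast_nonneg hA0 ht).1 hA.1,
    (Real.lt_rpow_inv_iff_of_pos hA0 (by positivity) ht).1 hA.2⟩

namespace Real

variable {α : ℝ}

theorem rpow_rpow_inv_pow_succ {x : ℝ} (hx : 0 ≤ x) (hα : 0 < α) (n : ℕ) :
    (x ^ α) ^ (α ^ (n + 1))⁻¹ = x ^ (α ^ n)⁻¹ := by
  rw [← rpow_mul hx, pow_succ', mul_inv, mul_inv_cancel_left₀ hα.ne']

theorem monotone_rpow_inv_pow {x : ℕ → ℝ} (hx : ∀ n, 0 ≤ x n) (hα : 0 < α)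
    (h : ∀ n, x n ^ α ≤ x (n + 1)) : Monotone fun n => x n ^ (α ^ n)⁻¹ :=
  monotone_nat_of_le_succ fun n => by
    rw [← rpow_rpow_inv_pow_succ (hx n) hα n]
    exact rpow_le_rpow (rpow_nonneg (hx n) α) (h n) (by positivity)

theorem strictAnti_rpow_inv_pow {y : ℕ → ℝ} (hy : ∀ n, 0 ≤ y n) (hα : 0 < α)
    (h : ∀ n, y (n + 1) < y n ^ α) : StrictAnti fun n => y n ^ (α ^ n)⁻¹ :=
  strictAnti_nat_of_succ_lt fun n => by
    rw [← rpow_rpow_inv_pow_succ (hy n) hα n]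
    exact rpow_lt_rpow (hy (n + 1)) (h n) (by positivity)

end Real

theorem stmt8_general (α : ℝ) (hα : 1 < α) (p : ℕ → ℕ)
    (hrec : ∀ n, (p n : ℝ) ^ α ≤ (p (n + 1) : ℝ) ∧
      (p (n + 1) : ℝ) < ((p n : ℝ) + 1) ^ α - 1) :
    Monotone (fun n : ℕ => (p n : ℝ) ^ ((α ^ n)⁻¹)) ∧
    StrictAnti (fun n : ℕ => ((p n : ℝ) + 1) ^ ((α ^ n)⁻¹)) ∧
    (∀ n : ℕ, (p n : ℝ) ^ ((α ^ n)⁻¹) < ((p n : ℝ) + 1) ^ ((α ^ n)⁻¹)) ∧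
    ∃ A : ℝ, Filter.Tendsto (fun n : ℕ => (p n : ℝ) ^ ((α ^ n)⁻¹))
        Filter.atTop (nhds A) ∧
      ∀ n : ℕ, ⌊A ^ (α ^ n)⌋₊ = p n := by
  have hα0 : 0 < α := one_pos.trans hα
  have ha := Real.monotone_rpow_inv_pow (fun n => (p n).cast_nonneg) hα0 fun n => (hrec n).1
  have hb := Real.strictAnti_rpow_inv_pow (y := fun n => (p n : ℝ) + 1) (fun n => by positivity)
    hα0 fun n => by linarith [(hrec n).2]
  have hab : ∀ n : ℕ, (p n : ℝ) ^ ((α ^ n)⁻¹) < ((p n : ℝ) + 1) ^ ((α ^ n)⁻¹) := fun n =>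
    Real.rpow_lt_rpow (p n).cast_nonneg (lt_add_one _) (by positivity)
  obtain ⟨A, hlim, hA⟩ := exists_tendsto_of_monotone_of_strictAnti ha hb fun n => (hab n).le
  exact ⟨ha, hb, hab, A, hlim, fun n => Nat.floor_rpow_eq_of_mem_Ico (by positivity) (hA n)⟩

/-- For `α > 1` and primes `p_n` with `p_n^α ≤ p_{n+1} < (p_n+1)^α - 1`, the sequences
`a_n = p_n^{α^{-n}}` and `b_n = (p_n+1)^{α^{-n}}` satisfy: `a` is nondecreasing, `b` is
strictly decreasing, `a_n < b_n`, and `A = lim a_n` exists with `⌊A^{α^n}⌋ = p_n` for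
all `n`. -/
theorem stmt8 (α : ℝ) (hα : 1 < α) (p : ℕ → ℕ) (hp : ∀ n, (p n).Prime)
    (hrec : ∀ n, (p n : ℝ) ^ α ≤ (p (n + 1) : ℝ) ∧
      (p (n + 1) : ℝ) < ((p n : ℝ) + 1) ^ α - 1) :
    Monotone (fun n : ℕ => (p n : ℝ) ^ ((α ^ n)⁻¹)) ∧
    StrictAnti (fun n : ℕ => ((p n : ℝ) + 1) ^ ((α ^ n)⁻¹)) ∧
    (∀ n : ℕ, (p n : ℝ) ^ ((α ^ n)⁻¹) < ((p n : ℝ) + 1) ^ ((α ^ n)⁻¹)) ∧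
    ∃ A : ℝ, Filter.Tendsto (fun n : ℕ => (p n : ℝ) ^ ((α ^ n)⁻¹))
        Filter.atTop (nhds A) ∧
      ∀ n : ℕ, ⌊A ^ (α ^ n)⌋₊ = p n :=
  stmt8_general α hα p hrec
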